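/- arXiv:2501.10945 — 2 statements merged into one kernel-verified Lean document; each statement's English description precedes it below -/
import Mathlib

section
/- Let g_1,…,g_m ∈ ℝ^d and let λ* ∈ Δ_m be a minimizer over the simplex Δ_m of λ ↦ ‖Σ_{i=1}^m λ_i g_i‖². Set d = Σ_{i=1}^m λ*_i g_i (the MGDA common descent direction). Then ⟨g_i, d⟩ ≥ ‖d‖² for every i ∈ [m]. Consequently, if d ≠ 0, then −d is a direction in which the linearization of every objective decreases by at least ‖d‖². -/
/-!
The minimum-norm element `v` of a convex set `K` is the projection of `0` onto `K`, so the
variational inequality `⟪0 - v, w - v⟫ ≤ 0`, i.e. `‖v‖² ≤ ⟪w, v⟫`, holds for every `w ∈ K`.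
The MGDA direction is the minimum-norm element of the convex hull of the gradients, which
contains each gradient.
-/

open RealInnerProductSpace

theorem IsMinOn.norm_sq_le_inner {F : Type*} [NormedAddCommGroup F] [InnerProductSpace ℝ F]
    {K : Set F} (hK : Convex ℝ K) {v : F} (hv : v ∈ K) (hmin : IsMinOn (‖·‖) K v)
    {w : F} (hw : w ∈ K) : ‖v‖ ^ 2 ≤ ⟪w, v⟫ := by
  have hproj : ‖0 - v‖ = ⨅ u : K, ‖0 - (u : F)‖ := by
    have : Nonempty K := ⟨⟨v, hv⟩⟩
    simp only [zero_sub, norm_neg]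
    exact le_antisymm (le_ciInf fun u => hmin u.2)
      (ciInf_le ⟨0, Set.forall_mem_range.2 fun u : K => norm_nonneg (u : F)⟩ ⟨v, hv⟩)
  have hvar := (norm_eq_iInf_iff_real_inner_le_zero hK hv).1 hproj w hw
  rw [zero_sub, inner_neg_left, inner_sub_right, real_inner_self_eq_norm_sq,
    real_inner_comm] at hvar
  linarith

theorem sq_norm_sum_smul_le_inner_of_isMinOn_stdSimplex {ι F : Type*} [Fintype ι]
    [NormedAddCommGroup F] [InnerProductSpace ℝ F] (g : ι → F) {lam : ι → ℝ}
    (hlam : lam ∈ stdSimplex ℝ ι)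
    (hmin : IsMinOn (fun μ => ‖∑ i, μ i • g i‖) (stdSimplex ℝ ι) lam) (i : ι) :
    ‖∑ j, lam j • g j‖ ^ 2 ≤ ⟪g i, ∑ j, lam j • g j⟫ := by
  classical
  set K := Fintype.linearCombination ℝ g '' stdSimplex ℝ ι
  have hK : Convex ℝ K := (convex_stdSimplex ℝ ι).linear_image _
  have hminK : IsMinOn (‖·‖) K (∑ j, lam j • g j) := by
    rintro _ ⟨μ, hμ, rfl⟩
    exact hmin hμ
  have hgi : g i ∈ K :=
    ⟨Pi.single i 1, single_mem_stdSimplex ℝ i, by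
      simp [Fintype.linearCombination_apply, Pi.single_apply]⟩
  exact hminK.norm_sq_le_inner hK ⟨lam, hlam, rfl⟩ hgi

/-- If `lam` minimizes `‖∑ i, λ i • g i‖²` over the simplex, then the MGDA
direction `dir = ∑ i, lam i • g i` satisfies `⟪g i, dir⟫ ≥ ‖dir‖²` for every `i`. -/
theorem mgda_direction_common_descent
    {d m : ℕ} (g : Fin m → EuclideanSpace ℝ (Fin d))
    (lam : Fin m → ℝ) (hlam : ∀ i, 0 ≤ lam i) (hlamsum : ∑ i, lam i = 1)
    (hmin : ∀ μ : Fin m → ℝ, (∀ i, 0 ≤ μ i) → (∑ i, μ i = 1) →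
      ‖∑ i, lam i • g i‖ ^ 2 ≤ ‖∑ i, μ i • g i‖ ^ 2) :
    ∀ i, ‖∑ j, lam j • g j‖ ^ 2 ≤ ⟪g i, ∑ j, lam j • g j⟫ :=
  sq_norm_sum_smul_le_inner_of_isMinOn_stdSimplex g ⟨hlam, hlamsum⟩ fun μ ⟨hμ, hμsum⟩ =>
    (pow_le_pow_iff_left₀ (norm_nonneg _) (norm_nonneg _) two_ne_zero).1 (hmin μ hμ hμsum)
end

section
/- Let K be a set, f = (f_1,…,f_m) : K → ℝ^m, z ∈ ℝ^m, μ > 0, and let α ∈ Δ_m satisfy α_i > 0 for all i. If θ* ∈ K minimizes the smooth Tchebycheff scalarization f_α^STCH(θ, μ) = μ log Σ_{i=1}^m exp(α_i (f_i(θ) − z_i)/μ) over K, then θ* is weakly Pareto optimal. -/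
/-!
Log-sum-exp is strictly increasing in each coordinate, and with `α > 0`, `μ > 0` so is the
scalarization as a function of the objective vector; hence a point strictly dominating `θs`
would have a strictly smaller scalarization value.
-/

open Real Finset

noncomputable def stch {ι : Type*} [Fintype ι] (α z : ι → ℝ) (μ : ℝ) (y : ι → ℝ) : ℝ :=
  μ * log (∑ i, exp (α i * (y i - z i) / μ))

theorem log_sum_exp_lt_log_sum_exp {ι : Type*} [Fintype ι] [Nonempty ι] {a b : ι → ℝ}
    (hab : ∀ i, a i < b i) : log (∑ i, exp (a i)) < log (∑ i, exp (b i)) := by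
  have hpos : 0 < ∑ i, exp (a i) := sum_pos (fun i _ => exp_pos _) univ_nonempty
  exact log_lt_log hpos (sum_lt_sum_of_nonempty univ_nonempty fun i _ => exp_lt_exp.mpr (hab i))

theorem stch_lt_stch {ι : Type*} [Fintype ι] [Nonempty ι] {α z : ι → ℝ} {μ : ℝ}
    (hμ : 0 < μ) (hα : ∀ i, 0 < α i) {y y' : ι → ℝ} (hyy' : ∀ i, y i < y' i) :
    stch α z μ y < stch α z μ y' := by
  refine mul_lt_mul_of_pos_left (log_sum_exp_lt_log_sum_exp fun i => ?_) hμ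
  gcongr
  exacts [hα i, hyy' i]

theorem stch_min_is_weakly_pareto_optimal_general
    {Θ : Type*} {m : ℕ} (K : Set Θ)
    (f : Fin m → Θ → ℝ) (z : Fin m → ℝ) (μ : ℝ) (hμ : 0 < μ)
    (α : Fin m → ℝ) (hαpos : ∀ i, 0 < α i) (hαsum : ∑ i, α i = 1)
    (θs : Θ)
    (hmin : ∀ θ ∈ K,
      μ * Real.log (∑ i, Real.exp (α i * (f i θs - z i) / μ)) ≤
        μ * Real.log (∑ i, Real.exp (α i * (f i θ - z i) / μ))) :
    ¬ ∃ θ ∈ K, ∀ i, f i θ < f i θs := by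
  rintro ⟨θ, hθ, hdom⟩
  have : Nonempty (Fin m) := by
    by_contra hempty
    simp_all [not_nonempty_iff]
  exact (hmin θ hθ).not_gt (stch_lt_stch (z := z) hμ hαpos hdom)

/-- If `α` is in the simplex with all entries positive and `θs ∈ K` minimizes
the smooth Tchebycheff scalarization over `K` (with smoothing parameter `μ > 0` and
reference point `z`), then `θs` is weakly Pareto optimal. -/
theorem stch_min_is_weakly_pareto_optimal
    {Θ : Type*} {m : ℕ} (K : Set Θ)
    (f : Fin m → Θ → ℝ) (z : Fin m → ℝ) (μ : ℝ) (hμ : 0 < μ)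
    (α : Fin m → ℝ) (hαpos : ∀ i, 0 < α i) (hαsum : ∑ i, α i = 1)
    (θs : Θ) (hθs : θs ∈ K)
    (hmin : ∀ θ ∈ K,
      μ * Real.log (∑ i, Real.exp (α i * (f i θs - z i) / μ)) ≤
        μ * Real.log (∑ i, Real.exp (α i * (f i θ - z i) / μ))) :
    ¬ ∃ θ ∈ K, ∀ i, f i θ < f i θs :=
  stch_min_is_weakly_pareto_optimal_general K f z μ hμ α hαpos hαsum θs hmin
end
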